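/- arXiv:1904.00854 — 4 statements merged into one kernel-verified Lean document; each statement's English description precedes it below -/
import Mathlib

section
/- Let (X,T) and (Y,S) be minimal topological dynamical systems on compact metric spaces, and let π: X → Y be a factor map such that the fiber π^{−1}(y) has exactly two elements for every y ∈ Y. Then there exists a homeomorphism Φ: X → X with Φ∘T = T∘Φ, Φ∘Φ = id_X, π∘Φ = π, and Φ(x) ≠ x for every x ∈ X; in particular Aut(X,T) contains an element of order 2. -/
/-!
Exchanging the two points of each fiber defines a fixed-point-free involution `σ = partner`
of `X` commuting with `T`; the only issue is its continuity. Its graph is the closed set of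
pairs in a common fiber at distance `≥ δ` as soon as `dist x (σ x) ≥ δ > 0` for all `x`, so
it suffices to separate the fibers uniformly. The closed sets `{x | dist x (σ x) ≥ 1/(n+1)}`
cover `X`, so by Baire one of them contains an open set `U`. Every orbit meets `U`, and
iterates of `T` are uniformly continuous and commute with `σ`, which gives a positive lower
bound for `dist x (σ x)` near every point, hence on all of `X` by compactness.
-/

open Function Filter Topology Set

theorem continuous_of_isClosed_graph {X Z : Type*} [TopologicalSpace X] [TopologicalSpace Z]
    [CompactSpace Z] {f : X → Z} (hf : IsClosed {p : X × Z | p.2 = f p.1}) : Continuous f := by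
  refine continuous_iff_isClosed.mpr fun C hC => ?_
  have hpre : f ⁻¹' C = Prod.fst '' ({p : X × Z | p.2 = f p.1} ∩ univ ×ˢ C) := by
    ext x
    simp
  rw [hpre]
  exact isClosedMap_fst_of_compactSpace _ (hf.inter (isClosed_univ.prod hC))

theorem exists_pos_forall_le_of_forall_eventually {X : Type*} [TopologicalSpace X]
    [CompactSpace X] {φ : X → ℝ} (h : ∀ x, ∃ η > 0, ∀ᶠ x' in 𝓝 x, η ≤ φ x') :
    ∃ η > 0, ∀ x, η ≤ φ x := by
  have hsmall : ∀ᶠ ε in 𝓝 (0 : ℝ), ∀ x ∈ univ, ε ≤ φ x :=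
    isCompact_univ.eventually_forall_of_forall_eventually fun x _ => by
      obtain ⟨η, hη, hx⟩ := h x
      rw [nhds_prod_eq]
      exact ((eventually_le_nhds hη).prod_mk hx).mono fun p hp => hp.1.trans hp.2
  obtain ⟨ε, hε, hεpos⟩ := ((hsmall.filter_mono nhdsWithin_le_nhds).and
    self_mem_nhdsWithin).exists (f := 𝓝[>] (0 : ℝ))
  exact ⟨ε, hεpos, fun x => hε x (mem_univ x)⟩

theorem UniformContinuous.exists_pos_le_dist_of_le_dist {X Z : Type*} [PseudoMetricSpace X]
    [PseudoMetricSpace Z] {f : X → Z} (hf : UniformContinuous f) {c : ℝ} (hc : 0 < c) :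
    ∃ η > 0, ∀ a b, c ≤ dist (f a) (f b) → η ≤ dist a b := by
  obtain ⟨η, hη, hfη⟩ := Metric.uniformContinuous_iff.mp hf c hc
  exact ⟨η, hη, fun a b hab => not_lt.mp fun hlt => (hfη hlt).not_ge hab⟩

theorem isClosed_setOf_eq_and_le_dist {X Y : Type*} [PseudoMetricSpace X] [TopologicalSpace Y]
    [T2Space Y] {π : X → Y} (hπ : Continuous π) (c : ℝ) :
    IsClosed {p : X × X | π p.1 = π p.2 ∧ c ≤ dist p.1 p.2} :=
  (isClosed_eq (hπ.comp continuous_fst) (hπ.comp continuous_snd)).inter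
    (isClosed_le continuous_const continuous_dist)

def IsTwoToOne {X Y : Type*} (π : X → Y) : Prop :=
  ∀ y, ∃ a b : X, a ≠ b ∧ π ⁻¹' {y} = {a, b}

namespace IsTwoToOne

variable {X Y : Type*} {π : X → Y} (h : IsTwoToOne π)
include h

theorem exists_ne (x : X) : ∃ z, π z = π x ∧ z ≠ x := by
  obtain ⟨a, b, hab, hfib⟩ := h (π x)
  have hx : x ∈ π ⁻¹' {π x} := rfl
  have ha : a ∈ π ⁻¹' {π x} := hfib ▸ mem_insert a {b}
  have hb : b ∈ π ⁻¹' {π x} := hfib ▸ mem_insert_of_mem a rfl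
  rw [hfib] at hx
  rcases hx with rfl | rfl
  · exact ⟨b, hb, hab.symm⟩
  · exact ⟨a, ha, hab⟩

theorem eq_of_ne_of_ne {x z w : X} (hz : π z = π x) (hw : π w = π x) (hzx : z ≠ x)
    (hwx : w ≠ x) : z = w := by
  obtain ⟨a, b, -, hfib⟩ := h (π x)
  have hx : x ∈ π ⁻¹' {π x} := rfl
  have hz' : z ∈ π ⁻¹' {π x} := hz
  have hw' : w ∈ π ⁻¹' {π x} := hw
  rw [hfib] at hx hz' hw'
  rcases hx with rfl | rfl <;> rcases hz' with rfl | rfl <;> rcases hw' with rfl | rfl <;>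
    simp_all

noncomputable def partner (x : X) : X :=
  (h.exists_ne x).choose

theorem map_partner (x : X) : π (h.partner x) = π x :=
  (h.exists_ne x).choose_spec.1

theorem partner_ne (x : X) : h.partner x ≠ x :=
  (h.exists_ne x).choose_spec.2

theorem eq_partner {x z : X} (hz : π z = π x) (hzx : z ≠ x) : z = h.partner x :=
  h.eq_of_ne_of_ne hz (h.map_partner x) hzx (h.partner_ne x)

theorem involutive_partner : Involutive h.partner := fun x =>
  (h.eq_partner (h.map_partner x).symm (h.partner_ne x).symm).symm

theorem commute_partner {f : X → X} {g : Y → Y} (hf : Injective f) (hfg : Semiconj π f g) :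
    Function.Commute h.partner f := fun x =>
  (h.eq_partner (by rw [hfg, hfg, h.map_partner]) (hf.ne (h.partner_ne x))).symm

section Metric

variable [MetricSpace X]

theorem eq_and_le_dist_iff {c : ℝ} (hc : 0 < c) {a b : X} :
    (π a = π b ∧ c ≤ dist a b) ↔ (b = h.partner a ∧ c ≤ dist a (h.partner a)) := by
  constructor
  · rintro ⟨hab, hc'⟩
    have hba : b = h.partner a :=
      h.eq_partner hab.symm fun hba => by rw [hba, dist_self] at hc'; linarith
    exact ⟨hba, hba ▸ hc'⟩
  · rintro ⟨rfl, hc'⟩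
    exact ⟨(h.map_partner a).symm, hc'⟩

variable [CompactSpace X]

theorem eventually_le_dist_partner {f : X → X} (hf : Continuous f)
    (hfp : Function.Commute h.partner f) {c : ℝ} (hc : 0 < c) {U : Set X} (hU : IsOpen U)
    (hUc : U ⊆ {x | c ≤ dist x (h.partner x)}) {x : X} (hx : f x ∈ U) :
    ∃ η > 0, ∀ᶠ x' in 𝓝 x, η ≤ dist x' (h.partner x') := by
  obtain ⟨η, hη, hfη⟩ :=
    (CompactSpace.uniformContinuous_of_continuous hf).exists_pos_le_dist_of_le_dist hc
  refine ⟨η, hη, (hf.continuousAt.eventually_mem (hU.mem_nhds hx)).mono fun x' hx' => ?_⟩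
  exact hfη _ _ (hfp x' ▸ hUc hx')

variable [TopologicalSpace Y] [T2Space Y]

theorem isClosed_setOf_le_dist_partner (hπ : Continuous π) {c : ℝ} (hc : 0 < c) :
    IsClosed {x | c ≤ dist x (h.partner x)} := by
  have himage : {x | c ≤ dist x (h.partner x)} =
      Prod.fst '' {p : X × X | π p.1 = π p.2 ∧ c ≤ dist p.1 p.2} := by
    ext x
    simp only [mem_ofPred_eq, mem_image, Prod.exists, exists_and_right, exists_eq_right,
      h.eq_and_le_dist_iff hc, exists_eq, true_and]
  rw [himage]
  exact isClosedMap_fst_of_compactSpace _ (isClosed_setOf_eq_and_le_dist hπ c)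

theorem continuous_partner (hπ : Continuous π) {δ : ℝ} (hδ : 0 < δ)
    (hsep : ∀ x, δ ≤ dist x (h.partner x)) : Continuous h.partner := by
  refine continuous_of_isClosed_graph ?_
  convert isClosed_setOf_eq_and_le_dist hπ δ using 1
  exact Set.ext fun p => ((h.eq_and_le_dist_iff hδ).trans (and_iff_left (hsep p.1))).symm

theorem exists_pos_interior_setOf_le_dist_partner_nonempty [Nonempty X]
    (hπ : Continuous π) :
    ∃ c > 0, (interior {x | c ≤ dist x (h.partner x)}).Nonempty := by
  have hcover : ⋃ n : ℕ, {x | 1 / ((n : ℝ) + 1) ≤ dist x (h.partner x)} = univ := by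
    refine eq_univ_of_forall fun x => mem_iUnion.mpr ?_
    obtain ⟨n, hn⟩ := exists_nat_one_div_lt (dist_pos.mpr (h.partner_ne x).symm)
    exact ⟨n, hn.le⟩
  obtain ⟨n, hn⟩ := nonempty_interior_of_iUnion_of_closed
    (fun n => h.isClosed_setOf_le_dist_partner hπ Nat.one_div_pos_of_nat) hcover
  exact ⟨_, Nat.one_div_pos_of_nat, hn⟩

theorem exists_pos_forall_le_dist_partner (hπ : Continuous π) (T : X ≃ₜ X)
    (hT : Function.Commute h.partner T)
    (hTmin : ∀ x : X, Dense (range (fun n : ℕ => (⇑T)^[n] x) ∪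
      range (fun n : ℕ => (⇑T.symm)^[n] x))) :
    ∃ δ > 0, ∀ x, δ ≤ dist x (h.partner x) := by
  cases isEmpty_or_nonempty X
  · exact ⟨1, one_pos, isEmptyElim⟩
  obtain ⟨c, hc, hU⟩ := h.exists_pos_interior_setOf_le_dist_partner_nonempty hπ
  have hTsymm : Function.Commute h.partner T.symm :=
    hT.inverses_right T.apply_symm_apply T.symm_apply_apply
  refine exists_pos_forall_le_of_forall_eventually fun x => ?_
  obtain ⟨_, ⟨n, rfl⟩ | ⟨n, rfl⟩, hxU⟩ := (hTmin x).exists_mem_open isOpen_interior hU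
  · exact h.eventually_le_dist_partner (T.continuous.iterate n) (hT.iterate_right n) hc
      isOpen_interior interior_subset hxU
  · exact h.eventually_le_dist_partner (T.symm.continuous.iterate n) (hTsymm.iterate_right n)
      hc isOpen_interior interior_subset hxU

end Metric

end IsTwoToOne

theorem stmt_3_general {X Y : Type*} [MetricSpace X] [CompactSpace X]
    [MetricSpace Y]
    (T : X ≃ₜ X) (S : Y ≃ₜ Y)
    (hTmin : ∀ x : X,
      Dense (Set.range (fun n : ℕ => (⇑T)^[n] x) ∪
        Set.range (fun n : ℕ => (⇑T.symm)^[n] x)))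
    (π : X → Y) (hπc : Continuous π)
    (hcomm : ∀ x : X, π (T x) = S (π x))
    (hfib : ∀ y : Y, ∃ a b : X, a ≠ b ∧ π ⁻¹' {y} = {a, b}) :
    ∃ Φ : X ≃ₜ X, (∀ x, Φ (T x) = T (Φ x)) ∧ (∀ x, Φ (Φ x) = x) ∧
      (∀ x, π (Φ x) = π x) ∧ ∀ x, Φ x ≠ x := by
  have h : IsTwoToOne π := hfib
  have hT : Function.Commute h.partner T := h.commute_partner T.injective hcomm
  obtain ⟨δ, hδ, hsep⟩ := h.exists_pos_forall_le_dist_partner hπc T hT hTmin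
  have hcont : Continuous h.partner := h.continuous_partner hπc hδ hsep
  exact ⟨⟨h.involutive_partner.toPerm _, hcont, hcont⟩, hT, h.involutive_partner,
    h.map_partner, h.partner_ne⟩

/-- a uniformly 2-to-1 factor map between minimal topological dynamical
systems on compact metric spaces yields an automorphism of order 2 of the extension,
which exchanges the two points in each fiber. -/
theorem stmt_3 {X Y : Type*} [MetricSpace X] [CompactSpace X]
    [MetricSpace Y] [CompactSpace Y]
    (T : X ≃ₜ X) (S : Y ≃ₜ Y)
    (hTmin : ∀ x : X,
      Dense (Set.range (fun n : ℕ => (⇑T)^[n] x) ∪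
        Set.range (fun n : ℕ => (⇑T.symm)^[n] x)))
    (hSmin : ∀ y : Y,
      Dense (Set.range (fun n : ℕ => (⇑S)^[n] y) ∪
        Set.range (fun n : ℕ => (⇑S.symm)^[n] y)))
    (π : X → Y) (hπc : Continuous π) (hπs : Function.Surjective π)
    (hcomm : ∀ x : X, π (T x) = S (π x))
    (hfib : ∀ y : Y, ∃ a b : X, a ≠ b ∧ π ⁻¹' {y} = {a, b}) :
    ∃ Φ : X ≃ₜ X, (∀ x, Φ (T x) = T (Φ x)) ∧ (∀ x, Φ (Φ x) = x) ∧
      (∀ x, π (Φ x) = π x) ∧ ∀ x, Φ x ≠ x :=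
  stmt_3_general T S hTmin π hπc hcomm hfib
end

section
/- Let X ⊆ 𝒜^ℤ be an infinite minimal subshift with language ℒ. A bijection Φ: ℒ → ℒ is an ℒ-automorphism if and only if there exists a map φ: 𝒜 → 𝒜 such that Φ(w_1⋯w_n) = φ(w_1)⋯φ(w_n) for every word w_1⋯w_n ∈ ℒ and the coordinatewise map x ↦ (φ(x_n))_{n∈ℤ} is an automorphism of (X,σ). -/
open scoped Classical

noncomputable section

/-- The product topology on `ℤ → A`, where the alphabet `A` carries the discrete topology. -/
abbrev seqTop (A : Type*) : TopologicalSpace (ℤ → A) :=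
  @Pi.topologicalSpace ℤ (fun _ => A) (fun _ => ⊥)

/-- The left shift map `σ`. -/
def shiftMap {A : Type*} (x : ℤ → A) : ℤ → A := fun n => x (n + 1)

/-- The shift by `m` steps, i.e. `σ ^ m`. -/
def shiftBy {A : Type*} (m : ℤ) (x : ℤ → A) : ℤ → A := fun n => x (n + m)

/-- The coordinatewise extension of a letter-to-letter map. -/
def codeMap {A B : Type*} (τ : A → B) : (ℤ → A) → (ℤ → B) := fun x n => τ (x n)

/-- The closure of the two-sided shift orbit of `x`. -/
def orbitClosure {A : Type*} (x : ℤ → A) : Set (ℤ → A) :=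
  @closure _ (seqTop A) (Set.range fun m : ℤ => shiftBy m x)

/-- A subshift: a nonempty, closed, shift-invariant subset of `ℤ → A`. -/
def IsSubshift {A : Type*} (X : Set (ℤ → A)) : Prop :=
  X.Nonempty ∧ @IsClosed _ (seqTop A) X ∧ shiftMap '' X = X

/-- A minimal subshift: every orbit is dense. -/
def IsMinimalSubshift {A : Type*} (X : Set (ℤ → A)) : Prop :=
  IsSubshift X ∧ ∀ x ∈ X, X ⊆ orbitClosure x

/-- `substPow θ r k a j` is the `(j+1)`-st letter of `θ^k(a)`, meaningful for `j < r ^ k`. -/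
def substPow {A : Type*} (θ : A → ℕ → A) (r : ℕ) : ℕ → A → ℕ → A
  | 0, a, _ => a
  | k + 1, a, j => θ (substPow θ r k a (j / r)) (j % r)

/-- A substitution of constant length `r` is primitive if for some `k ≥ 1` every letter
occurs in every `θ^k(a)`. -/
def SubstPrimitive {A : Type*} (θ : A → ℕ → A) (r : ℕ) : Prop :=
  ∃ k, 1 ≤ k ∧ ∀ a a' : A, ∃ j < r ^ k, substPow θ r k a j = a'

/-- The action of `θ^k` on bi-infinite sequences, with the image of `x₀` beginning at
coordinate `0`. -/
def substActPow {A : Type*} (θ : A → ℕ → A) (r k : ℕ) (x : ℤ → A) : ℤ → A :=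
  fun n => substPow θ r k (x (Int.fdiv n (r ^ k))) ((Int.fmod n (r ^ k)).toNat)

/-- A bi-infinite `θ`-periodic point. -/
def IsSubstPeriodicPt {A : Type*} (θ : A → ℕ → A) (r : ℕ) (x : ℤ → A) : Prop :=
  ∃ j, 1 ≤ j ∧ substActPow θ r j x = x

/-- `X` is the substitution shift `X_θ`: the orbit closure of a bi-infinite `θ`-periodic
point. -/
def IsSubstShift {A : Type*} (θ : A → ℕ → A) (r : ℕ) (X : Set (ℤ → A)) : Prop :=
  ∃ x : ℤ → A, IsSubstPeriodicPt θ r x ∧ X = orbitClosure x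

/-- An automorphism of the subshift `X`: a self-homeomorphism of `X` commuting with the
shift. -/
def IsAut {A : Type*} (X : Set (ℤ → A)) (Φ : (ℤ → A) → (ℤ → A)) : Prop :=
  Set.BijOn Φ X X ∧ @ContinuousOn _ _ (seqTop A) (seqTop A) Φ X ∧
    (∀ x ∈ X, Φ (shiftMap x) = shiftMap (Φ x)) ∧
    ∃ Ψ : (ℤ → A) → (ℤ → A), Set.MapsTo Ψ X X ∧
      @ContinuousOn _ _ (seqTop A) (seqTop A) Ψ X ∧ ∀ x ∈ X, Ψ (Φ x) = x

/-- A topological conjugacy between the subshifts `X` and `Y`. -/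
def IsConjugacy {A B : Type*} (X : Set (ℤ → A)) (Y : Set (ℤ → B))
    (h : (ℤ → A) → (ℤ → B)) : Prop :=
  Set.BijOn h X Y ∧ @ContinuousOn _ _ (seqTop A) (seqTop B) h X ∧
    (∀ x ∈ X, h (shiftMap x) = shiftMap (h x)) ∧
    ∃ g : (ℤ → B) → (ℤ → A), Set.MapsTo g Y X ∧
      @ContinuousOn _ _ (seqTop B) (seqTop A) g Y ∧ ∀ x ∈ X, g (h x) = x

/-- `X` and `Y` are topologically conjugate subshifts. -/
def TopConjugate {A B : Type*} (X : Set (ℤ → A)) (Y : Set (ℤ → B)) : Prop :=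
  ∃ h, IsConjugacy X Y h

/-- `(P, σ^n)` is a minimal system: `P` is nonempty, `σ^n`-invariant (in both directions)
and every `σ^n`-orbit is dense in `P`. -/
def MinimalUnderPow {A : Type*} (n : ℕ) (P : Set (ℤ → A)) : Prop :=
  P.Nonempty ∧ (∀ y ∈ P, ∀ m : ℤ, shiftBy ((n : ℤ) * m) y ∈ P) ∧
    ∀ y ∈ P, P ⊆ @closure _ (seqTop A) (Set.range fun m : ℤ => shiftBy ((n : ℤ) * m) y)

/-- A cyclic `σ^n`-minimal partition of `X` with `m` members. -/
def IsCyclicMinPartition {A : Type*} (X : Set (ℤ → A)) (n m : ℕ)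
    (P : ZMod m → Set (ℤ → A)) : Prop :=
  0 < m ∧ (∀ i, @IsClosed _ (seqTop A) (P i)) ∧
    (Pairwise fun i j => Disjoint (P i) (P j)) ∧ (⋃ i, P i) = X ∧
    (∀ i, shiftMap '' P i = P (i + 1)) ∧ ∀ i, MinimalUnderPow n (P i)

/-- `Φ` has `κ`-value zero: it fixes each member of every cyclic `σ^n`-minimal
partition of `X`. -/
def KappaZero {A : Type*} (X : Set (ℤ → A)) (Φ : (ℤ → A) → (ℤ → A)) : Prop :=
  ∀ n : ℕ, 1 ≤ n → ∀ m : ℕ, ∀ P : ZMod m → Set (ℤ → A),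
    IsCyclicMinPartition X n m P → ∀ i, Φ '' P i = P i

/-- `(a, b)` is a periodic pair for `θ`. -/
def IsPeriodicPair {A : Type*} (θ : A → ℕ → A) (r : ℕ) (a b : A) : Prop :=
  a ≠ b ∧ ∃ p, 1 ≤ p ∧ ∃ j < r ^ p, substPow θ r p a j = a ∧ substPow θ r p b j = b

/-- The least period `p(a,b)` of a periodic pair. -/
def pairPeriod {A : Type*} (θ : A → ℕ → A) (r : ℕ) (a b : A) : ℕ :=
  sInf {p | 1 ≤ p ∧ ∃ j < r ^ p, substPow θ r p a j = a ∧ substPow θ r p b j = b}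

/-- `p(θ)`: the least common multiple of the periods of the periodic pairs of `θ`
(equal to `1` if there are none). -/
def substPairLcm {A : Type*} [Fintype A] (θ : A → ℕ → A) (r : ℕ) : ℕ :=
  Finset.univ.lcm fun ab : A × A =>
    if IsPeriodicPair θ r ab.1 ab.2 then pairPeriod θ r ab.1 ab.2 else 1

/-- `θ` is pair-aperiodic: every periodic pair has period `1`. -/
def PairAperiodic {A : Type*} (θ : A → ℕ → A) (r : ℕ) : Prop :=
  ∀ a b : A, IsPeriodicPair θ r a b → ∃ j < r, θ a j = a ∧ θ b j = b

/-- `(c, d)` is `k`-reachable from `(a, b)`. -/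
def PairReachable {A : Type*} (θ : A → ℕ → A) (r k : ℕ) (a b c d : A) : Prop :=
  ∃ j < r ^ k, substPow θ r k a j = c ∧ substPow θ r k b j = d

/-- `(a, b)` is an asymptotic disjoint pair. -/
def AsympDisjointPair {A : Type*} (θ : A → ℕ → A) (r : ℕ) (a b : A) : Prop :=
  ∀ k, 1 ≤ k → ∃ j < r ^ k, substPow θ r k a j ≠ substPow θ r k b j

/-- A right-infinite fixed point of `θ`. -/
def IsRightFixed {A : Type*} (θ : A → ℕ → A) (r : ℕ) (u : ℕ → A) : Prop :=
  ∀ n : ℕ, θ (u (n / r)) (n % r) = u n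

/-- A left-infinite fixed point of `θ` (only coordinates `< 0` are meaningful). -/
def IsLeftFixed {A : Type*} (θ : A → ℕ → A) (r : ℕ) (v : ℤ → A) : Prop :=
  ∀ m : ℤ, m < 0 → θ (v (Int.fdiv m r)) ((Int.fmod m r).toNat) = v m

/-- `θ` is injective: distinct letters have distinct images. -/
def SubstInjective {A : Type*} (θ : A → ℕ → A) (r : ℕ) : Prop :=
  ∀ a b : A, (∀ j < r, θ a j = θ b j) → a = b

/-- `θ` is strongly injective: injective, no two distinct right-infinite fixed points agree
on all coordinates `n ≥ 1`, and no two distinct left-infinite fixed points agree on all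
coordinates `n ≤ -2`. -/
def StronglyInjective {A : Type*} (θ : A → ℕ → A) (r : ℕ) : Prop :=
  SubstInjective θ r ∧
    (∀ u u' : ℕ → A, IsRightFixed θ r u → IsRightFixed θ r u' →
      (∀ n, 1 ≤ n → u n = u' n) → u = u') ∧
    (∀ v v' : ℤ → A, IsLeftFixed θ r v → IsLeftFixed θ r v' →
      (∀ m : ℤ, m ≤ -2 → v m = v' m) → ∀ m : ℤ, m < 0 → v m = v' m)

/-- `θ` has height one. -/
def HeightOne {A : Type*} (θ : A → ℕ → A) (r : ℕ) : Prop :=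
  ∀ u : ℕ → A, IsRightFixed θ r u →
    ∀ n, 1 ≤ n → Nat.Coprime n r → (∀ a, 1 ≤ a → u a = u 0 → n ∣ a) → n = 1

/-- The column number `c(θ)`. -/
def columnNumber {A : Type*} [Fintype A] (θ : A → ℕ → A) (r : ℕ) : ℕ :=
  sInf {c | ∃ k, 1 ≤ k ∧ ∃ j < r ^ k,
    c = (Set.range fun a : A => substPow θ r k a j).ncard}

/-- A minimal set for `θ`: a column image of cardinality `c(θ)`. -/
def IsMinimalSet {A : Type*} [Fintype A] (θ : A → ℕ → A) (r : ℕ) (M : Set A) : Prop :=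
  M.ncard = columnNumber θ r ∧
    ∃ k, 1 ≤ k ∧ ∃ j < r ^ k, M = Set.range fun a : A => substPow θ r k a j

/-- `d*(θ^k(a), θ^k(b))`: the proportion of coordinates where `θ^k(a)` and `θ^k(b)`
disagree. -/
def dStar {A : Type*} (θ : A → ℕ → A) (r k : ℕ) (a b : A) : ℝ :=
  (((Finset.range (r ^ k)).filter
      fun j => substPow θ r k a j ≠ substPow θ r k b j).card : ℝ) / ((r : ℝ) ^ k)

/-- `θ` is reduced: for no pair of distinct letters does `d*(θ^k(a), θ^k(b))` tend to `0`. -/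
def SubstReduced {A : Type*} (θ : A → ℕ → A) (r : ℕ) : Prop :=
  ∀ a b : A, a ≠ b →
    ¬ Filter.Tendsto (fun k => dStar θ r k a b) Filter.atTop (nhds (0 : ℝ))

/-- `ι : C → (ℕ → B)` presents `C` as the alphabet of `k`-blocks of the fixed point `u`
of `η`, and `ηk` as the `k`-compression `η^{(k)}` of `η`. -/
def IsCompression {B C : Type*} (η : B → ℕ → B) (r k : ℕ) (u : ℕ → B)
    (ι : C → ℕ → B) (ηk : C → ℕ → C) : Prop :=
  IsRightFixed η r u ∧
    (∀ c c' : C, (∀ j < k, ι c j = ι c' j) → c = c') ∧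
    (∀ c : C, ∃ m : ℕ, ∀ j < k, ι c j = u (m * k + j)) ∧
    (∀ m : ℕ, ∃ c : C, ∀ j < k, ι c j = u (m * k + j)) ∧
    (∀ c : C, ∀ i < r, ∀ j < k,
      ι (ηk c i) j = η (ι c ((i * k + j) / r)) ((i * k + j) % r))

/-- The `τ`-twist of a substitution: `(θ_τ(α))_j = τ^j(θ(α)_j)`. -/
def twistSubst {C : Type*} (θ : C → ℕ → C) (τ : C → C) : C → ℕ → C :=
  fun c j => τ^[j] (θ c j)

end

/-- The language of a subshift: all (nonempty) finite words occurring in points of `X`. -/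
def langOf {A : Type*} (X : Set (ℤ → A)) : Set (List A) :=
  {w | w ≠ [] ∧ ∃ x ∈ X, ∃ j : ℤ, ∀ i : Fin w.length, w.get i = x (j + ((i : ℕ) : ℤ))}

namespace Stmt4Aux

variable {A : Type*}

/-- The word of length `n` read in `x` starting at coordinate `j`. -/
def wordAt (x : ℤ → A) (j : ℤ) (n : ℕ) : List A :=
  List.ofFn fun i : Fin n => x (j + (i : ℕ))

lemma wordAt_mem_lang {X : Set (ℤ → A)} {x : ℤ → A} (hx : x ∈ X) (j : ℤ) (n : ℕ)
    (hn : n ≠ 0) : wordAt x j n ∈ langOf X := by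
  refine ⟨?_, x, hx, j, ?_⟩
  · intro h
    have := congrArg List.length h
    simp [wordAt] at this
    exact hn this
  · intro i
    exact List.get_ofFn (fun i : Fin n => x (j + (i : ℕ))) _

lemma singleton_mem_lang {X : Set (ℤ → A)} {x : ℤ → A} (hx : x ∈ X) (j : ℤ) :
    [x j] ∈ langOf X := by
  have h := wordAt_mem_lang hx j 1 one_ne_zero
  have : wordAt x j 1 = [x j] := by
    simp [wordAt, List.ofFn_succ]
  rwa [this] at h

lemma lang_head {X : Set (ℤ → A)} {a : A} {t : List A} (h : a :: t ∈ langOf X) :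
    [a] ∈ langOf X := by
  obtain ⟨-, x, hx, j, hget⟩ := h
  have h0 := hget ⟨0, by simp⟩
  simp at h0
  rw [h0]
  exact singleton_mem_lang hx j

lemma lang_tail {X : Set (ℤ → A)} {a : A} {t : List A} (h : a :: t ∈ langOf X)
    (ht : t ≠ []) : t ∈ langOf X := by
  obtain ⟨-, x, hx, j, hget⟩ := h
  refine ⟨ht, x, hx, j + 1, ?_⟩
  intro i
  have hi : ((i : ℕ) + 1) < (a :: t).length := by
    simpa using i.isLt
  have := hget ⟨(i : ℕ) + 1, hi⟩
  simpa [List.get_cons_succ, add_assoc, add_comm (1 : ℤ)] using this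

lemma lang_letter {X : Set (ℤ → A)} {w : List A} (h : w ∈ langOf X) :
    ∀ a ∈ w, [a] ∈ langOf X := by
  induction w with
  | nil => intro a ha; simp at ha
  | cons b t ih =>
    intro a ha
    rcases List.mem_cons.1 ha with rfl | ha
    · exact lang_head h
    · have ht : t ≠ [] := by rintro rfl; simp at ha
      exact ih (lang_tail h ht) a ha

lemma shiftBy_mem {X : Set (ℤ → A)} (hX : shiftMap '' X = X) :
    ∀ m : ℤ, ∀ x ∈ X, shiftBy m x ∈ X := by
  have hfwd : ∀ x ∈ X, shiftMap x ∈ X := by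
    intro x hx; rw [← hX]; exact Set.mem_image_of_mem _ hx
  intro m
  induction m using Int.induction_on with
  | zero => intro x hx; have : shiftBy 0 x = x := by funext n; simp [shiftBy]
            rwa [this]
  | succ k ih =>
    intro x hx
    have h1 : shiftBy ((k : ℤ) + 1) x = shiftMap (shiftBy k x) := by
      funext n; simp [shiftBy, shiftMap]; ring_nf
    rw [h1]; exact hfwd _ (ih x hx)
  | pred k ih =>
    intro x hx
    have h0 : shiftBy (-(k : ℤ)) x ∈ X := ih x hx
    rw [← hX] at h0
    obtain ⟨y, hy, hsy⟩ := h0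
    have : shiftBy (-(k : ℤ) - 1) x = y := by
      funext n
      have := congrFun hsy (n - 1)
      simp only [shiftMap, shiftBy] at this ⊢
      rw [show n - 1 + 1 = n by ring] at this
      rw [this]
      congr 1; ring
    rwa [this]

lemma mem_of_words {X : Set (ℤ → A)} (hX : IsSubshift X) {x : ℤ → A}
    (h : ∀ n : ℕ, ∃ y ∈ X, ∀ m : ℤ, -(n : ℤ) ≤ m → m ≤ n → y m = x m) : x ∈ X := by
  letI : TopologicalSpace A := ⊥
  haveI : DiscreteTopology A := ⟨rfl⟩
  have hcl : IsClosed X := hX.2.1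
  rw [← hcl.closure_eq]
  rw [mem_closure_iff_nhds]
  intro t ht
  rw [nhds_pi] at ht
  obtain ⟨I, hIf, s, hs, hsub⟩ := Filter.mem_pi.1 ht
  obtain ⟨a, ha⟩ := hIf.bddAbove
  obtain ⟨b, hb⟩ := hIf.bddBelow
  set n : ℕ := (max a (-b)).toNat with hn
  have hbound : ∀ i ∈ I, -(n : ℤ) ≤ i ∧ i ≤ n := by
    intro i hi
    have h1 : i ≤ a := ha hi
    have h2 : b ≤ i := hb hi
    have h3 : max a (-b) ≤ (n : ℤ) := Int.self_le_toNat _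
    constructor
    · have : -b ≤ (n : ℤ) := le_trans (le_max_right _ _) h3
      omega
    · have : a ≤ (n : ℤ) := le_trans (le_max_left _ _) h3
      omega
  obtain ⟨y, hy, hagree⟩ := h n
  refine ⟨y, hsub ?_, hy⟩
  intro i hi
  have hxi : x i ∈ s i := by
    have := hs i
    rw [nhds_discrete] at this
    simpa using this
  rw [hagree i (hbound i hi).1 (hbound i hi).2]
  exact hxi

lemma mem_of_wordAt {X : Set (ℤ → A)} (hX : IsSubshift X) {z : ℤ → A}
    (h : ∀ (j : ℤ) (n : ℕ), n ≠ 0 → wordAt z j n ∈ langOf X) : z ∈ X := by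
  apply mem_of_words hX
  intro n
  obtain ⟨hne, x, hxX, j, hget⟩ := h (-(n : ℤ)) (2 * n + 1) (by omega)
  refine ⟨shiftBy (j + n) x, shiftBy_mem hX.2.2 _ x hxX, ?_⟩
  intro m hm1 hm2
  have hlen : (wordAt z (-(n : ℤ)) (2 * n + 1)).length = 2 * n + 1 := by
    simp [wordAt]
  have hi : (m + n).toNat < (wordAt z (-(n : ℤ)) (2 * n + 1)).length := by
    rw [hlen]; omega
  have hg := hget ⟨(m + n).toNat, hi⟩
  have hgl : (wordAt z (-(n : ℤ)) (2 * n + 1)).get ⟨(m + n).toNat, hi⟩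
      = z (-(n : ℤ) + (((m + n).toNat : ℕ) : ℤ)) :=
    List.get_ofFn (fun i : Fin (2 * n + 1) => z (-(n : ℤ) + (i : ℕ))) _
  rw [hgl] at hg
  have htn : ((m + n).toNat : ℤ) = m + n := Int.toNat_of_nonneg (by omega)
  have hL : -(n : ℤ) + ((m + n).toNat : ℤ) = m := by rw [htn]; ring
  have hR : j + ((m + n).toNat : ℤ) = m + (j + n) := by rw [htn]; ring
  rw [hL, hR] at hg
  simpa [shiftBy] using hg.symm

lemma wordAt_codeMap (τ : A → A) (z : ℤ → A) (j : ℤ) (n : ℕ) :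
    wordAt (codeMap τ z) j n = (wordAt z j n).map τ := by
  simp [wordAt, codeMap, List.map_ofFn]
  rfl

lemma codeMap_continuous (τ : A → A) :
    @Continuous _ _ (seqTop A) (seqTop A) (codeMap τ) := by
  letI : TopologicalSpace A := ⊥
  exact continuous_pi fun n => continuous_bot.comp (continuous_apply n)

end Stmt4Aux

open Stmt4Aux in
/-- a bijection of the language of an infinite minimal subshift is an
`ℒ`-automorphism (multiplicative on admissible concatenations) iff it is induced by a
letter map `φ` whose coordinatewise extension is an automorphism of `(X, σ)`. -/
theorem stmt_4 {A : Type*} [Fintype A]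
    (X : Set (ℤ → A)) (hmin : IsMinimalSubshift X) (hinf : X.Infinite)
    (Φ : List A → List A) (hbij : Set.BijOn Φ (langOf X) (langOf X)) :
    (∀ w₁ w₂ : List A, w₁ ∈ langOf X → w₂ ∈ langOf X → w₁ ++ w₂ ∈ langOf X →
        Φ (w₁ ++ w₂) = Φ w₁ ++ Φ w₂) ↔
      ∃ φ : A → A, (∀ w ∈ langOf X, Φ w = w.map φ) ∧ IsAut X (codeMap φ) := by
  constructor
  · intro hmul
    set L := langOf X with hL
    -- Step 1: `Φ` does not decrease length.
    have hlen : ∀ w ∈ L, w.length ≤ (Φ w).length := by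
      intro w
      induction w with
      | nil => intro _; simp
      | cons a t ih =>
        intro hw
        by_cases ht : t = []
        · subst ht
          have h1 : Φ [a] ∈ L := hbij.mapsTo hw
          have : Φ [a] ≠ [] := h1.1
          simpa [Nat.one_le_iff_ne_zero, List.length_eq_zero_iff] using this
        · have hta : [a] ∈ L := lang_head hw
          have htl : t ∈ L := lang_tail hw ht
          have heq : Φ (a :: t) = Φ [a] ++ Φ t :=
            hmul [a] t hta htl (by simpa using hw)
          have h1 : Φ [a] ≠ [] := (hbij.mapsTo hta).1
          have h1' : 1 ≤ (Φ [a]).length := by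
            simpa [Nat.one_le_iff_ne_zero, List.length_eq_zero_iff] using h1
          have h2 := ih htl
          rw [heq]
          simp only [List.length_append, List.length_cons]
          omega
    -- Step 2: `Φ` maps one-letter words to one-letter words.
    set T : Set (List A) := {w | w ∈ L ∧ w.length = 1} with hTdef
    have hTfin : T.Finite := by
      have hsub : T ⊆ (fun a : A => [a]) '' Set.univ := by
        rintro w ⟨hw, hl⟩
        obtain ⟨b, rfl⟩ := List.length_eq_one_iff.1 hl
        exact ⟨b, trivial, rfl⟩
      exact (Set.finite_univ.image _).subset hsub
    have hTL : T ⊆ L := fun w hw => hw.1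
    have hTsub : T ⊆ Φ '' T := by
      rintro w ⟨hw, hl⟩
      obtain ⟨v, hv, rfl⟩ := hbij.surjOn hw
      have h1 : v.length ≤ 1 := hl ▸ hlen v hv
      have h0 : v.length ≠ 0 := by
        simpa [List.length_eq_zero_iff] using hv.1
      exact ⟨v, ⟨hv, le_antisymm h1 (Nat.one_le_iff_ne_zero.2 h0)⟩, rfl⟩
    have hTim : T = Φ '' T :=
      Set.eq_of_subset_of_ncard_le hTsub
        (Set.ncard_image_of_injOn (hbij.injOn.mono hTL)).le (hTfin.image _)
    have hT1 : ∀ a : A, [a] ∈ L → (Φ [a]).length = 1 := by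
      intro a ha
      have : Φ [a] ∈ Φ '' T := ⟨[a], ⟨ha, rfl⟩, rfl⟩
      rw [← hTim] at this
      exact this.2
    haveI : Inhabited A := ⟨hmin.1.1.choose 0⟩
    set φ : A → A := fun a => (Φ [a]).headI with hφdef
    have hφa : ∀ a : A, [a] ∈ L → Φ [a] = [φ a] := by
      intro a ha
      obtain ⟨b, hb⟩ := List.length_eq_one_iff.1 (hT1 a ha)
      rw [hb]; simp [hφdef, hb]
    -- Step 3: `Φ` is induced by `φ` on the language.
    have hmap : ∀ w ∈ L, Φ w = w.map φ := by
      intro w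
      induction w with
      | nil => intro h; exact absurd rfl h.1
      | cons a t ih =>
        intro hw
        by_cases ht : t = []
        · subst ht; simpa using hφa a hw
        · have hta : [a] ∈ L := lang_head hw
          have htl : t ∈ L := lang_tail hw ht
          have heq : Φ (a :: t) = Φ [a] ++ Φ t :=
            hmul [a] t hta htl (by simpa using hw)
          rw [heq, hφa a hta, ih htl]
          simp
    -- Step 4: `φ` is injective on letters of the language, with inverse `ψ`.
    have hφL : ∀ a : A, [a] ∈ L → [φ a] ∈ L := by
      intro a ha
      have := hbij.mapsTo ha
      rwa [hφa a ha] at this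
    have hinjφ : ∀ a b : A, [a] ∈ L → [b] ∈ L → φ a = φ b → a = b := by
      intro a b ha hb hab
      have : Φ [a] = Φ [b] := by rw [hφa a ha, hφa b hb, hab]
      have := hbij.injOn ha hb this
      simpa using this
    have hsurjφ : ∀ b : A, [b] ∈ L → ∃ a, [a] ∈ L ∧ φ a = b := by
      intro b hb
      have hbT : [b] ∈ Φ '' T := hTim ▸ (⟨hb, rfl⟩ : [b] ∈ T)
      obtain ⟨w, ⟨hwL, hw1⟩, hΦw⟩ := hbT
      obtain ⟨a, rfl⟩ := List.length_eq_one_iff.1 hw1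
      refine ⟨a, hwL, ?_⟩
      have := hφa a hwL
      rw [this] at hΦw
      simpa using hΦw
    set ψ : A → A := fun b =>
      if h : ∃ a, [a] ∈ L ∧ φ a = b then h.choose else b with hψdef
    have hφψ : ∀ b : A, [b] ∈ L → [ψ b] ∈ L ∧ φ (ψ b) = b := by
      intro b hb
      have hex : ∃ a, [a] ∈ L ∧ φ a = b := hsurjφ b hb
      have : ψ b = hex.choose := by rw [hψdef]; exact dif_pos hex
      rw [this]
      exact ⟨hex.choose_spec.1, hex.choose_spec.2⟩
    have hψφ : ∀ a : A, [a] ∈ L → ψ (φ a) = a := by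
      intro a ha
      have hex : ∃ a', [a'] ∈ L ∧ φ a' = φ a := ⟨a, ha, rfl⟩
      have h1 : ψ (φ a) = hex.choose := by rw [hψdef]; exact dif_pos hex
      rw [h1]
      exact hinjφ _ _ hex.choose_spec.1 ha hex.choose_spec.2
    -- Step 5: both `map φ` and `map ψ` preserve the language.
    have hφlang : ∀ w ∈ L, w.map φ ∈ L := by
      intro w hw
      have := hbij.mapsTo hw
      rwa [hmap w hw] at this
    have hψlang : ∀ w ∈ L, w.map ψ ∈ L := by
      intro w hw
      obtain ⟨v, hv, rfl⟩ := hbij.surjOn hw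
      rw [hmap v hv, List.map_map]
      have : v.map (ψ ∘ φ) = v := by
        have h1 : ∀ a ∈ v, (ψ ∘ φ) a = id a := fun a ha =>
          hψφ a (lang_letter hv a ha)
        rw [List.map_congr_left h1, List.map_id]
      rw [this]
      exact hv
    -- Step 6: coordinatewise maps preserve `X`.
    have hcode : ∀ τ : A → A, (∀ w ∈ L, w.map τ ∈ L) → ∀ z ∈ X, codeMap τ z ∈ X := by
      intro τ hτ z hz
      apply mem_of_wordAt hmin.1
      intro j n hn
      rw [wordAt_codeMap]
      exact hτ _ (wordAt_mem_lang hz j n hn)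
    have hletter : ∀ z ∈ X, ∀ n : ℤ, [z n] ∈ L := fun z hz n => singleton_mem_lang hz n
    have hψφX : ∀ z ∈ X, codeMap ψ (codeMap φ z) = z := by
      intro z hz
      funext n
      exact hψφ (z n) (hletter z hz n)
    have hφψX : ∀ z ∈ X, codeMap φ (codeMap ψ z) = z := by
      intro z hz
      funext n
      exact (hφψ (z n) (hletter z hz n)).2
    refine ⟨φ, hmap, ?_, ?_, ?_, codeMap ψ, ?_, ?_, ?_⟩
    · -- BijOn
      refine ⟨fun z hz => hcode φ hφlang z hz, ?_, ?_⟩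
      · intro z hz z' hz' hzz
        have := congrArg (codeMap ψ) hzz
        rwa [hψφX z hz, hψφX z' hz'] at this
      · intro z hz
        exact ⟨codeMap ψ z, hcode ψ hψlang z hz, hφψX z hz⟩
    · letI : TopologicalSpace A := ⊥
      exact (codeMap_continuous φ).continuousOn
    · intro z _; rfl
    · exact fun z hz => hcode ψ hψlang z hz
    · letI : TopologicalSpace A := ⊥
      exact (codeMap_continuous ψ).continuousOn
    · exact fun z hz => hψφX z hz
  · rintro ⟨φ, hφ, -⟩ w₁ w₂ h1 h2 h12
    rw [hφ _ h12, hφ _ h1, hφ _ h2, List.map_append]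
end

section
/- Let θ be a substitution of constant length r on a finite alphabet 𝒜. Then θ^{p(θ)} (a substitution of constant length r^{p(θ)}) is pair-aperiodic. -/
open scoped Classical

section Aux

variable {A : Type*}

private lemma substPow_add (θ : A → ℕ → A) (r : ℕ) (hr : 1 ≤ r) :
    ∀ m n (a : A) (j : ℕ), substPow θ r (m + n) a j =
      substPow θ r m (substPow θ r n a (j / r ^ m)) (j % r ^ m)
  | 0, n, a, j => by simp [substPow]
  | m + 1, n, a, j => by
    have h1 : m + 1 + n = (m + n) + 1 := by omega
    rw [h1]
    simp only [substPow]
    rw [substPow_add θ r hr m n a (j / r)]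
    have e1 : j / r / r ^ m = j / r ^ (m + 1) := by
      rw [Nat.div_div_eq_div_mul, pow_succ']
    have e2 : (j % r ^ (m + 1)) / r = (j / r) % r ^ m := by
      rw [pow_succ']
      exact Nat.mod_mul_right_div_self j r (r ^ m)
    have e3 : j % r ^ (m + 1) % r = j % r :=
      Nat.mod_mod_of_dvd j (dvd_pow_self r (Nat.succ_ne_zero m))
    rw [e1, e2, e3]

private lemma substPow_pow (θ : A → ℕ → A) (r : ℕ) (hr : 1 ≤ r) (p : ℕ) :
    ∀ k (a : A) (j : ℕ), j < (r ^ p) ^ k →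
      substPow (substPow θ r p) (r ^ p) k a j = substPow θ r (p * k) a j
  | 0, a, j, _ => by simp [substPow]
  | k + 1, a, j, h => by
    have hR : 0 < r ^ p := Nat.pow_pos hr
    simp only [substPow]
    have hdiv : j / r ^ p < (r ^ p) ^ k := by
      rw [Nat.div_lt_iff_lt_mul hR]
      rw [pow_succ] at h
      exact h
    rw [substPow_pow θ r hr p k a (j / r ^ p) hdiv]
    have hpk : p * (k + 1) = p + p * k := by ring
    rw [hpk, substPow_add θ r hr p (p * k) a j]

private lemma fix_iter (θ : A → ℕ → A) (r : ℕ) (hr : 1 ≤ r) (p0 : ℕ) (a b : A)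
    (j0 : ℕ) (hj0 : j0 < r ^ p0) (ha : substPow θ r p0 a j0 = a)
    (hb : substPow θ r p0 b j0 = b) :
    ∀ t, ∃ J < r ^ (p0 * t), substPow θ r (p0 * t) a J = a ∧ substPow θ r (p0 * t) b J = b
  | 0 => ⟨0, by simp [substPow]⟩
  | t + 1 => by
    obtain ⟨J, hJ, hJa, hJb⟩ := fix_iter θ r hr p0 a b j0 hj0 ha hb t
    set M := r ^ (p0 * t) with hM
    have hMpos : 0 < M := Nat.pow_pos hr
    refine ⟨J + j0 * M, ?_, ?_, ?_⟩
    · have : J + j0 * M < M + j0 * M := by omega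
      calc J + j0 * M < (j0 + 1) * M := by rw [add_mul, one_mul]; omega
        _ ≤ r ^ p0 * M := Nat.mul_le_mul_right M hj0
        _ = r ^ (p0 * (t + 1)) := by rw [hM, ← pow_add]; ring_nf
    all_goals {
      have hstep : p0 * (t + 1) = p0 * t + p0 := by ring
      rw [hstep, substPow_add θ r hr (p0 * t) p0 _ (J + j0 * M)]
      have ediv : (J + j0 * M) / M = j0 := by
        rw [Nat.add_mul_div_right _ _ hMpos, Nat.div_eq_of_lt hJ, Nat.zero_add]
      have emod : (J + j0 * M) % M = J := by
        rw [Nat.add_mul_mod_self_right, Nat.mod_eq_of_lt hJ]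
      rw [← hM, ediv, emod]
      first
      | rw [ha]; exact hJa
      | rw [hb]; exact hJb
    }

private lemma pairPeriod_mem {θ : A → ℕ → A} {r : ℕ} {a b : A}
    (h : IsPeriodicPair θ r a b) :
    pairPeriod θ r a b ∈ {p | 1 ≤ p ∧ ∃ j < r ^ p, substPow θ r p a j = a ∧ substPow θ r p b j = b} := by
  apply Nat.sInf_mem
  obtain ⟨-, p, hp⟩ := h
  exact ⟨p, hp⟩

private lemma substPairLcm_pos {A : Type*} [Fintype A] (θ : A → ℕ → A) (r : ℕ) :
    1 ≤ substPairLcm θ r := by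
  rw [Nat.one_le_iff_ne_zero, substPairLcm, Ne, Finset.lcm_eq_zero_iff]
  intro h
  obtain ⟨ab, -, hab⟩ := h
  by_cases hper : IsPeriodicPair θ r ab.1 ab.2
  · rw [if_pos hper] at hab
    have := (pairPeriod_mem hper).1
    omega
  · rw [if_neg hper] at hab
    exact one_ne_zero hab

end Aux

/-- `θ^{p(θ)}` is pair-aperiodic. -/
theorem stmt_5 {A : Type*} [Fintype A] (θ : A → ℕ → A) (r : ℕ) (hr : 2 ≤ r) :
    PairAperiodic (substPow θ r (substPairLcm θ r)) (r ^ substPairLcm θ r) := by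

  have hr1 : 1 ≤ r := by omega
  set p := substPairLcm θ r with hp
  have hppos : 1 ≤ p := substPairLcm_pos θ r
  intro a b hpair
  obtain ⟨hab, q, hq, j, hjlt, hfa, hfb⟩ := hpair
  -- translate the Θ-periodic pair into a θ-periodic pair of period p*q
  rw [substPow_pow θ r hr1 p q a j hjlt] at hfa
  rw [substPow_pow θ r hr1 p q b j hjlt] at hfb
  have hjlt' : j < r ^ (p * q) := by rwa [pow_mul]
  have hperθ : IsPeriodicPair θ r a b :=
    ⟨hab, p * q, Nat.one_le_iff_ne_zero.mpr (by positivity), j, hjlt', hfa, hfb⟩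
  -- the minimal pair period and its witness
  obtain ⟨hp0pos, j0, hj0lt, hj0a, hj0b⟩ := pairPeriod_mem hperθ
  set p0 := pairPeriod θ r a b with hp0
  -- p0 divides p
  have hdvd : p0 ∣ p := by
    have := Finset.dvd_lcm (f := fun ab : A × A =>
      if IsPeriodicPair θ r ab.1 ab.2 then pairPeriod θ r ab.1 ab.2 else 1)
      (Finset.mem_univ (a, b))
    simp only [if_pos hperθ] at this
    exact this
  obtain ⟨t, ht⟩ := hdvd
  -- iterate the fixed column up to period p = p0 * t
  obtain ⟨J, hJlt, hJa, hJb⟩ := fix_iter θ r hr1 p0 a b j0 hj0lt hj0a hj0b t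
  rw [← ht] at hJlt hJa hJb
  exact ⟨J, hJlt, hJa, hJb⟩
end

section
/- Let (Y,σ) be an infinite r-automatic shift generated by (θ',τ') where θ' is primitive and pair-aperiodic. Then there exists an r-automatic pair (θ,τ), with θ a primitive and pair-aperiodic substitution of constant length r on some finite alphabet, which generates (Y,σ) and is minimal, i.e. no two distinct letters of the alphabet of θ are indistinguishable by (θ,τ). -/
open scoped Classical

section Stmt8Aux

variable {A B : Type*}

/-- Two letters are indistinguishable for the pair `(θ, τ)`. -/
def Indist8 (θ : A → ℕ → A) (r : ℕ) (τ : A → B) (a b : A) : Prop :=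
  ∀ k j, j < r ^ k → τ (substPow θ r k a j) = τ (substPow θ r k b j)

theorem substPow_add8 (θ : A → ℕ → A) (r : ℕ) :
    ∀ (l k : ℕ) (a : A) (j : ℕ), substPow θ r (k + l) a j
      = substPow θ r l (substPow θ r k a (j / r ^ l)) (j % r ^ l) := by
  intro l
  induction l with
  | zero => intro k a j; simp [substPow]
  | succ l ih =>
    intro k a j
    have h1 : j % r ^ (l + 1) % r = j % r :=
      Nat.mod_mod_of_dvd j (dvd_pow_self r (Nat.succ_ne_zero l))
    have h2 : j % r ^ (l + 1) / r = j / r % r ^ l := by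
      rw [pow_succ, mul_comm]; exact Nat.mod_mul_right_div_self j r (r ^ l)
    have h3 : j / r / r ^ l = j / r ^ (l + 1) := by
      rw [Nat.div_div_eq_div_mul, ← pow_succ']
    show substPow θ r ((k + l) + 1) a j = substPow θ r (l + 1) _ _
    simp only [substPow]
    rw [ih k a (j / r), h1, h2, h3]

theorem substPow_split8 (θ : A → ℕ → A) (r : ℕ) (hr : 0 < r) (k l : ℕ) (a : A)
    (j0 j1 : ℕ) (h1 : j1 < r ^ l) :
    substPow θ r (k + l) a (j1 + j0 * r ^ l) = substPow θ r l (substPow θ r k a j0) j1 := by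
  have e1 : (j1 + j0 * r ^ l) / r ^ l = j0 := by
    rw [Nat.add_mul_div_right _ _ (pow_pos hr l), Nat.div_eq_of_lt h1, zero_add]
  have e2 : (j1 + j0 * r ^ l) % r ^ l = j1 := by
    rw [Nat.add_mul_mod_self_right, Nat.mod_eq_of_lt h1]
  rw [substPow_add8, e1, e2]

theorem indist_substPow8 (θ : A → ℕ → A) (r : ℕ) (hr : 0 < r) (τ : A → B) {a b : A}
    (h : Indist8 θ r τ a b) (k j : ℕ) (hj : j < r ^ k) :
    Indist8 θ r τ (substPow θ r k a j) (substPow θ r k b j) := by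
  intro l i hi
  rw [← substPow_split8 θ r hr k l a j i hi, ← substPow_split8 θ r hr k l b j i hi]
  apply h (k + l)
  calc i + j * r ^ l < r ^ l + j * r ^ l := by omega
    _ = (j + 1) * r ^ l := by ring
    _ ≤ r ^ k * r ^ l := Nat.mul_le_mul_right _ hj
    _ = r ^ (k + l) := (pow_add r k l).symm

/-- The indistinguishability setoid. -/
def indistSetoid8 (θ : A → ℕ → A) (r : ℕ) (τ : A → B) : Setoid A where
  r := Indist8 θ r τ
  iseqv := ⟨fun _ _ _ _ => rfl, fun h k j hj => (h k j hj).symm,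
    fun h1 h2 k j hj => (h1 k j hj).trans (h2 k j hj)⟩

/-- The induced substitution on indistinguishability classes. -/
def qSubst8 (θ : A → ℕ → A) (r : ℕ) (hr : 0 < r) (τ : A → B) :
    Quotient (indistSetoid8 θ r τ) → ℕ → Quotient (indistSetoid8 θ r τ) :=
  fun c j => Quotient.liftOn c (fun a => Quotient.mk (indistSetoid8 θ r τ) (θ a (j % r)))
    (fun a b hab => Quotient.sound (by
      have h := indist_substPow8 θ r hr τ hab 1 (j % r) (by simpa using Nat.mod_lt j hr)
      have h2 : j % r % r = j % r := Nat.mod_mod_of_dvd j dvd_rfl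
      show Indist8 θ r τ (θ a (j % r)) (θ b (j % r))
      rw [← h2]
      exact h))

/-- The induced coding on indistinguishability classes. -/
def qTau8 (θ : A → ℕ → A) (r : ℕ) (τ : A → B) : Quotient (indistSetoid8 θ r τ) → B :=
  Quotient.lift τ (fun a b hab => hab 0 0 (by simp))

theorem codeMap_image_orbitClosure {A B : Type*} [Finite A] (g : A → B) (x : ℤ → A) :
    codeMap g '' orbitClosure x = orbitClosure (codeMap g x) := by
  letI : TopologicalSpace A := ⊥
  letI : TopologicalSpace B := ⊥
  haveI : DiscreteTopology A := ⟨rfl⟩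
  haveI : DiscreteTopology B := ⟨rfl⟩
  have hcont : Continuous (codeMap g : (ℤ → A) → (ℤ → B)) := by
    apply continuous_pi
    intro n
    exact continuous_of_discreteTopology.comp (continuous_apply n)
  have hS : codeMap g '' (Set.range fun m : ℤ => shiftBy m x)
      = Set.range fun m : ℤ => shiftBy m (codeMap g x) := by
    rw [← Set.range_comp]
    rfl
  have hK : IsCompact (orbitClosure x) := IsClosed.isCompact isClosed_closure
  apply Set.Subset.antisymm
  · have h1 := image_closure_subset_closure_image
      (s := Set.range fun m : ℤ => shiftBy m x) hcont
    rw [hS] at h1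
    exact h1
  · refine closure_minimal ?_ ((hK.image hcont).isClosed)
    rw [← hS]
    exact Set.image_mono subset_closure

end Stmt8Aux

/-- an infinite `r`-automatic shift generated by a primitive, pair-aperiodic
pair `(θ',τ')` is also generated by a minimal `r`-automatic pair `(θ,τ)` with `θ`
primitive and pair-aperiodic. -/
theorem stmt_8 {A B : Type*} [Fintype A] [Fintype B]
    (θ' : A → ℕ → A) (r : ℕ) (hr : 2 ≤ r) (hprim : SubstPrimitive θ' r)
    (hap : PairAperiodic θ' r)
    (τ' : A → B) (X : Set (ℤ → A)) (hX : IsSubstShift θ' r X)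
    (Y : Set (ℤ → B)) (hY : Y = codeMap τ' '' X) (hYinf : Y.Infinite) :
    ∃ (C : Type) (_ : Fintype C) (θ : C → ℕ → C) (τ : C → B) (X' : Set (ℤ → C)),
      SubstPrimitive θ r ∧ PairAperiodic θ r ∧ IsSubstShift θ r X' ∧
      codeMap τ '' X' = Y ∧
      ∀ a b : C, a ≠ b → ∃ k j : ℕ, j < r ^ k ∧
        τ (substPow θ r k a j) ≠ τ (substPow θ r k b j) := by
  classical
  have hr0 : 0 < r := by omega
  obtain ⟨x, ⟨p0, hp01, hp0fix⟩, hXeq⟩ := hX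
  set s := indistSetoid8 θ' r τ' with hs
  haveI : Finite (Quotient s) := Quotient.finite s
  haveI : Fintype (Quotient s) := Fintype.ofFinite _
  set n := Fintype.card (Quotient s) with hn
  let e : Quotient s ≃ Fin n := Fintype.equivFin _
  let π : A → Fin n := fun a => e (Quotient.mk s a)
  let θC : Fin n → ℕ → Fin n := fun c j => e (qSubst8 θ' r hr0 τ' (e.symm c) j)
  let τC : Fin n → B := fun c => qTau8 θ' r τ' (e.symm c)
  -- the key commutation lemma
  have hcomm : ∀ (k : ℕ) (a : A) (j : ℕ),
      substPow θC r k (π a) j = π (substPow θ' r k a j) := by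
    intro k
    induction k with
    | zero => intro a j; rfl
    | succ k ih =>
      intro a j
      show θC (substPow θC r k (π a) (j / r)) (j % r)
        = π (θ' (substPow θ' r k a (j / r)) (j % r))
      rw [ih]
      show e (qSubst8 θ' r hr0 τ' (e.symm (e (Quotient.mk s (substPow θ' r k a (j / r))))) (j % r))
        = _
      rw [Equiv.symm_apply_apply]
      show e (Quotient.mk s (θ' (substPow θ' r k a (j / r)) (j % r % r))) = _
      rw [Nat.mod_mod_of_dvd j dvd_rfl]
  have hcomm1 : ∀ (a : A) (i : ℕ), i < r → θC (π a) i = π (θ' a i) := by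
    intro a i hi
    have h := hcomm 1 a i
    simp only [substPow] at h
    rwa [Nat.mod_eq_of_lt hi] at h
  have hτ : ∀ a : A, τC (π a) = τ' a := by
    intro a
    show qTau8 θ' r τ' (e.symm (e (Quotient.mk s a))) = τ' a
    rw [Equiv.symm_apply_apply]
    rfl
  have hsurj : ∀ c : Fin n, ∃ a : A, π a = c := by
    intro c
    obtain ⟨a, ha⟩ := Quotient.exists_rep (e.symm c)
    refine ⟨a, ?_⟩
    show e (Quotient.mk s a) = c
    rw [ha, Equiv.apply_symm_apply]
  let x' : ℤ → Fin n := codeMap π x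
  refine ⟨Fin n, inferInstance, θC, τC, orbitClosure x', ?_, ?_, ?_, ?_, ?_⟩
  · -- primitivity
    obtain ⟨k, hk1, hkall⟩ := hprim
    refine ⟨k, hk1, ?_⟩
    intro c c'
    obtain ⟨a, ha⟩ := hsurj c
    obtain ⟨b, hb⟩ := hsurj c'
    obtain ⟨j, hj, hja⟩ := hkall a b
    exact ⟨j, hj, by rw [← ha, hcomm, hja, hb]⟩
  · -- pair-aperiodicity
    rintro c d ⟨hcd, p, hp1, j, hj, hfc, hfd⟩
    obtain ⟨a, ha⟩ := hsurj c
    obtain ⟨b, hb⟩ := hsurj d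
    let F : ℕ → A × A := fun m =>
      Nat.rec (motive := fun _ => A × A) (a, b)
        (fun _ q => (substPow θ' r p q.1 j, substPow θ' r p q.2 j)) m
    have hFs : ∀ m, F (m + 1)
        = (substPow θ' r p (F m).1 j, substPow θ' r p (F m).2 j) := fun _ => rfl
    have hπF : ∀ m, π (F m).1 = c ∧ π (F m).2 = d := by
      intro m
      induction m with
      | zero => exact ⟨ha, hb⟩
      | succ m ih =>
        rw [hFs]
        exact ⟨by rw [← hcomm, ih.1, hfc], by rw [← hcomm, ih.2, hfd]⟩
    have hreach : ∀ (t m : ℕ), ∃ J < r ^ (p * t),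
        substPow θ' r (p * t) (F m).1 J = (F (m + t)).1 ∧
        substPow θ' r (p * t) (F m).2 J = (F (m + t)).2 := by
      intro t
      induction t with
      | zero => intro m; exact ⟨0, by simp, rfl, rfl⟩
      | succ t ih =>
        intro m
        obtain ⟨J, hJ, h1, h2⟩ := ih m
        refine ⟨j + J * r ^ p, ?_, ?_, ?_⟩
        · calc j + J * r ^ p < r ^ p + J * r ^ p := by omega
            _ = (J + 1) * r ^ p := by ring
            _ ≤ r ^ (p * t) * r ^ p := Nat.mul_le_mul_right _ hJ
            _ = r ^ (p * (t + 1)) := by rw [← pow_add, Nat.mul_succ]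
        · rw [Nat.mul_succ, substPow_split8 θ' r hr0 (p * t) p _ J j hj, h1,
            show m + (t + 1) = (m + t) + 1 by omega, hFs]
        · rw [Nat.mul_succ, substPow_split8 θ' r hr0 (p * t) p _ J j hj, h2,
            show m + (t + 1) = (m + t) + 1 by omega, hFs]
    have key : ∀ m m' : ℕ, m < m' → F m = F m' →
        ∃ j' < r, θC c j' = c ∧ θC d j' = d := by
      intro m m' hlt hFeq
      obtain ⟨J, hJ, h1, h2⟩ := hreach (m' - m) m
      rw [show m + (m' - m) = m' by omega, ← hFeq] at h1 h2
      have hpp : IsPeriodicPair θ' r (F m).1 (F m).2 := by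
        refine ⟨?_, p * (m' - m), ?_, J, hJ, h1, h2⟩
        · intro hcontra
          apply hcd
          rw [← (hπF m).1, ← (hπF m).2, hcontra]
        · have : 1 ≤ m' - m := by omega
          calc 1 = 1 * 1 := (one_mul 1).symm
            _ ≤ p * (m' - m) := Nat.mul_le_mul hp1 this
      obtain ⟨j', hj', hfa, hfb⟩ := hap _ _ hpp
      refine ⟨j', hj', ?_, ?_⟩
      · rw [← (hπF m).1, hcomm1 _ _ hj', hfa]
      · rw [← (hπF m).2, hcomm1 _ _ hj', hfb]
    obtain ⟨m1, m2, hne, heq⟩ := Finite.exists_ne_map_eq_of_infinite F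
    rcases hne.lt_or_gt with hlt | hlt
    · exact key m1 m2 hlt heq
    · exact key m2 m1 hlt heq.symm
  · -- substitution shift
    refine ⟨x', ⟨p0, hp01, ?_⟩, rfl⟩
    funext m
    have hm := congrFun hp0fix m
    show substPow θC r p0 (π (x (Int.fdiv m ((r : ℕ) ^ p0))))
      ((Int.fmod m ((r : ℕ) ^ p0)).toNat) = π (x m)
    rw [hcomm]
    exact congrArg π hm
  · -- generates Y
    rw [hY, hXeq]
    rw [codeMap_image_orbitClosure, codeMap_image_orbitClosure]
    have hfg : codeMap τC x' = codeMap τ' x := by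
      funext m
      show τC (π (x m)) = τ' (x m)
      exact hτ (x m)
    rw [hfg]
  · -- minimality
    intro c d hcd
    obtain ⟨a, ha⟩ := hsurj c
    obtain ⟨b, hb⟩ := hsurj d
    have hnind : ¬ Indist8 θ' r τ' a b := by
      intro h
      apply hcd
      rw [← ha, ← hb]
      exact congrArg e (Quotient.sound h)
    unfold Indist8 at hnind
    push_neg at hnind
    obtain ⟨k, j, hj, hne⟩ := hnind
    refine ⟨k, j, hj, ?_⟩
    rw [← ha, ← hb, hcomm, hcomm, hτ, hτ]
    exact hne
end
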